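/- There exists a family of formulae (φ_k) with |φ_k| = O(k) such that ‖cl(φ_k)‖ > 2^k. Concretely: if Φ_k is the path formula p₁U q₁ ∧ (p₂U q₂ ∧ (... ∧ p_k U q_k)...) with 2k distinct atoms, then the γ-decomposition dec(Φ_k) has exactly 2^k elements. -/

import Mathlib

/-- A miniature syntax of state formulae: atoms, conjunction and ⊤. -/
inductive SF : Type where
  | atom : ℕ → SF
  | and : SF → SF → SF
  | top : SF
deriving DecidableEq

/-- A miniature syntax of path formulae: Until, conjunction and ⊤. -/
inductive PF : Type where
  | until : SF → SF → PF
  | and : PF → PF → PF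
  | top : PF
deriving DecidableEq

/-- The γ-decomposition function `dec`:
`dec(φ U ψ) = {⟨φ, φUψ⟩, ⟨ψ, ⊤⟩}` and `dec(Φ₁ ∧ Φ₂) = dec(Φ₁) ⊗ dec(Φ₂)`. -/
def dec : PF → Finset (SF × PF)
  | .until φ ψ => {(φ, .until φ ψ), (ψ, .top)}
  | .and Φ Ψ => ((dec Φ) ×ˢ (dec Ψ)).image (fun p => (SF.and p.1.1 p.2.1, PF.and p.1.2 p.2.2))
  | .top => {(.top, .top)}

/-- `PhiChain k` is the path formula `p₁ U q₁ ∧ (p₂ U q₂ ∧ (⋯ ∧ p_{k+1} U q_{k+1})⋯)`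
with `2(k+1)` pairwise distinct atoms. -/
def PhiChain : ℕ → PF
  | 0 => .until (.atom 0) (.atom 1)
  | k + 1 => .and (.until (.atom (2 * (k + 1))) (.atom (2 * (k + 1) + 1))) (PhiChain k)

lemma card_dec_until (φ ψ : SF) : (dec (.until φ ψ)).card = 2 := by
  rw [dec, Finset.card_pair]
  -- the second components `φ U ψ` and `⊤` differ even when `φ = ψ`
  intro h
  cases congrArg Prod.snd h

lemma card_dec_and (Φ Ψ : PF) : (dec (.and Φ Ψ)).card = (dec Φ).card * (dec Ψ).card := by
  rw [dec, Finset.card_image_of_injective _ ?inj, Finset.card_product]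
  rintro ⟨⟨φ₁, Φ₁⟩, ⟨ψ₁, Ψ₁⟩⟩ ⟨⟨φ₂, Φ₂⟩, ⟨ψ₂, Ψ₂⟩⟩ h
  simp only [Prod.mk.injEq, SF.and.injEq, PF.and.injEq] at h
  obtain ⟨⟨rfl, rfl⟩, rfl, rfl⟩ := h
  rfl

/-- the γ-decomposition of the conjunction of `k+1` Until-formulae on
pairwise distinct atoms has exactly `2^(k+1)` elements; hence `‖cl(φ_k)‖` is
exponential in `k` while `|φ_k| = O(k)`. -/
theorem dec_PhiChain_card (k : ℕ) : (dec (PhiChain k)).card = 2 ^ (k + 1) := by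
  induction k with
  | zero => exact card_dec_until _ _
  | succ k ih => rw [PhiChain, card_dec_and, card_dec_until, ih, pow_succ' 2 (k + 1)]
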